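/- arXiv:1605.06278 — 4 statements merged into one kernel-verified Lean document; each statement's English description precedes it below -/
import Mathlib

section
/- Let D be a countable discrete additive abelian group with compact character group D̂ and normalized Haar measure λ. If F : D̂ → M_{2k}(ℂ) is λ-integrable and satisfies F(χ) + (i/2)J_{2k} ≥ 0 for λ-a.e. χ, then the map K(a) = ∫_{D̂} χ(a) F(χ) dλ(χ) satisfies: for all finite sequences (a₁,…,aₙ) of distinct elements, [[K(a_j − a_i)]] + (i/2)J_{2kn} ≥ 0, where K(a_j − a_i) here denotes the block and J_{2kn} is the block-diagonal direct sum of n copies of J_{2k}. -/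
set_option maxHeartbeats 1000000

open MeasureTheory Matrix
open scoped ComplexOrder

/-- The multimode symplectic matrix `J_{2k}`: direct sum of `k` copies of `[[0,1],[-1,0]]`. -/
def Jc (k : ℕ) : Matrix (Fin (2 * k)) (Fin (2 * k)) ℂ :=
  Matrix.of fun i j =>
    if i.val % 2 = 0 ∧ j.val = i.val + 1 then 1
    else if j.val % 2 = 0 ∧ i.val = j.val + 1 then -1 else 0

/-- The block-diagonal matrix `J_{2kn}`: direct sum of `n` copies of `J_{2k}`. -/
def Jblock (k n : ℕ) : Matrix (Fin n × Fin (2 * k)) (Fin n × Fin (2 * k)) ℂ :=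
  Matrix.of fun p q => if p.1 = q.1 then Jc k p.2 q.2 else 0

section Aux

variable {D : Type*} [AddCommGroup D] [TopologicalSpace D] [DiscreteTopology D]

private lemma toCircle_zero' : AddCircle.toCircle (0 : AddCircle (1 : ℝ)) = 1 := by
  have : (0 : AddCircle (1 : ℝ)) = ((0 : ℝ) : AddCircle (1 : ℝ)) := by norm_cast
  rw [this, AddCircle.toCircle_apply_mk]
  simp

/-- The cast map `ℚ/ℤ →+ ℝ/ℤ`. -/
noncomputable def castAC : AddCircle (1 : ℚ) →+ AddCircle (1 : ℝ) :=
  QuotientAddGroup.map _ _ (Rat.castHom ℝ).toAddMonoidHom (by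
    intro x hx
    obtain ⟨n, hn⟩ := hx
    refine AddSubgroup.mem_comap.2 ⟨n, ?_⟩
    simp only [zsmul_eq_mul, mul_one] at hn ⊢
    simp [← hn])

lemma castAC_eq_zero {x : AddCircle (1 : ℚ)} (h : castAC x = 0) : x = 0 := by
  obtain ⟨q, rfl⟩ := QuotientAddGroup.mk_surjective x
  have h2 : ((q : ℝ) : AddCircle (1 : ℝ)) = 0 := h
  rw [AddCircle.coe_eq_zero_iff] at h2 ⊢
  obtain ⟨n, hn⟩ := h2
  refine ⟨n, ?_⟩
  simp only [zsmul_eq_mul, mul_one] at hn ⊢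
  exact_mod_cast hn

lemma exists_char_ne_one {a : D} (ha : a ≠ 0) :
    ∃ χ : PontryaginDual (Multiplicative D), χ (Multiplicative.ofAdd a) ≠ 1 := by
  obtain ⟨c, hc⟩ := CharacterModule.exists_character_apply_ne_zero_of_ne_zero ha
  refine ⟨⟨{ toFun := fun x => AddCircle.toCircle (castAC (c x.toAdd)),
             map_one' := ?_, map_mul' := ?_ }, continuous_of_discreteTopology⟩, ?_⟩
  · show AddCircle.toCircle (castAC (c (0 : D))) = 1
    rw [map_zero, map_zero, toCircle_zero']
  · intro x y
    show AddCircle.toCircle (castAC (c (Multiplicative.toAdd x + Multiplicative.toAdd y))) = _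
    rw [map_add, map_add, AddCircle.toCircle_add]
  · show AddCircle.toCircle (castAC (c a)) ≠ 1
    intro h
    rw [← toCircle_zero'] at h
    have := AddCircle.injective_toCircle one_ne_zero h
    exact hc (castAC_eq_zero this)

variable [MeasurableSpace (PontryaginDual (Multiplicative D))]
  [BorelSpace (PontryaginDual (Multiplicative D))]
  [CompactSpace (PontryaginDual (Multiplicative D))]
  (lam : Measure (PontryaginDual (Multiplicative D)))
  [lam.IsHaarMeasure] [IsProbabilityMeasure lam]

lemma cont_eval (x : Multiplicative D) :
    Continuous fun χ : PontryaginDual (Multiplicative D) => ((χ x : Circle) : ℂ) := by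
  have h1 : Continuous (ContinuousMonoidHom.toContinuousMap :
      PontryaginDual (Multiplicative D) → C(Multiplicative D, Circle)) :=
    (ContinuousMonoidHom.isInducing_toContinuousMap _ _).continuous
  have h2 : Continuous fun f : C(Multiplicative D, Circle) => f x :=
    continuous_eval_const x
  exact continuous_subtype_val.comp (h2.comp h1)

lemma integrable_eval (x : Multiplicative D) :
    Integrable (fun χ : PontryaginDual (Multiplicative D) => ((χ x : Circle) : ℂ)) lam :=
  ⟨(cont_eval x).aestronglyMeasurable,
    HasFiniteIntegral.of_bounded (C := 1) (Filter.Eventually.of_forall fun χ => by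
      simp [Circle.norm_coe])⟩

lemma integral_char_ne {a : D} (h : a ≠ 0) :
    ∫ χ, ((χ (Multiplicative.ofAdd a) : Circle) : ℂ) ∂lam = 0 := by
  obtain ⟨ψ, hψ⟩ := exists_char_ne_one h
  have key := integral_mul_left_eq_self (μ := lam)
    (fun χ => ((χ (Multiplicative.ofAdd a) : Circle) : ℂ)) ψ
  have hmul : ∀ χ : PontryaginDual (Multiplicative D),
      (((ψ * χ) (Multiplicative.ofAdd a) : Circle) : ℂ)
        = ((ψ (Multiplicative.ofAdd a) : Circle) : ℂ) *
          ((χ (Multiplicative.ofAdd a) : Circle) : ℂ) :=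
    fun χ => rfl
  simp only [hmul] at key
  rw [integral_const_mul] at key
  have h2 : (((ψ (Multiplicative.ofAdd a) : Circle) : ℂ) - 1) *
      ∫ χ, ((χ (Multiplicative.ofAdd a) : Circle) : ℂ) ∂lam = 0 := by
    rw [sub_mul, one_mul, key, sub_self]
  rcases mul_eq_zero.1 h2 with h3 | h3
  · exact absurd (Circle.coe_eq_one.1 (by linear_combination h3)) hψ
  · exact h3

end Aux

theorem fourier_transform_of_pointwise_quantum_density
    {D : Type*} [AddCommGroup D] [Countable D]
    [TopologicalSpace D] [DiscreteTopology D]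
    [MeasurableSpace (PontryaginDual (Multiplicative D))]
    [BorelSpace (PontryaginDual (Multiplicative D))]
    [CompactSpace (PontryaginDual (Multiplicative D))]
    (lam : Measure (PontryaginDual (Multiplicative D)))
    [lam.IsHaarMeasure] [IsProbabilityMeasure lam]
    {k : ℕ} (F : PontryaginDual (Multiplicative D) → Matrix (Fin (2 * k)) (Fin (2 * k)) ℂ)
    (hFint : ∀ r s, Integrable (fun χ => F χ r s) lam)
    (hFpos : ∀ᵐ χ ∂lam, (F χ + (Complex.I / 2) • Jc k).PosSemidef)
    (K : D → Matrix (Fin (2 * k)) (Fin (2 * k)) ℂ)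
    (hK : ∀ (a : D) (r s : Fin (2 * k)),
      K a r s = ∫ χ, ((χ (Multiplicative.ofAdd a) : Circle) : ℂ) * F χ r s ∂lam) :
    ∀ (n : ℕ) (a : Fin n → D), Function.Injective a →
      ((Matrix.of fun p q : Fin n × Fin (2 * k) => K (a q.1 - a p.1) p.2 q.2) +
        (Complex.I / 2) • Jblock k n).PosSemidef := by
  classical
  intro n a hainj
  set ev : D → PontryaginDual (Multiplicative D) → ℂ :=
    fun b χ => ((χ (Multiplicative.ofAdd b) : Circle) : ℂ) with hev
  set G : PontryaginDual (Multiplicative D) → Matrix (Fin (2 * k)) (Fin (2 * k)) ℂ :=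
    fun χ => F χ + (Complex.I / 2) • Jc k with hGdef
  have hGpos : ∀ᵐ χ ∂lam, (G χ).PosSemidef := hFpos
  have hGint : ∀ r s, Integrable (fun χ => G χ r s) lam := by
    intro r s
    have := (hFint r s).add (integrable_const ((Complex.I / 2) * Jc k r s))
    simpa [hGdef, Matrix.add_apply, Matrix.smul_apply, smul_eq_mul, Pi.add_def] using this
  -- conjugate of a character value
  have hconj : ∀ (b : D) χ, (starRingEnd ℂ) (ev b χ) = ev (-b) χ := by
    intro b χ
    rw [hev]
    simp only
    rw [← Circle.coe_inv_eq_conj, ← map_inv, ← ofAdd_neg]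
  have hev_mul : ∀ (b c : D) χ, ev b χ * (starRingEnd ℂ) (ev c χ) = ev (b - c) χ := by
    intro b c χ
    rw [hconj, hev]
    simp only
    rw [← Circle.coe_mul, ← _root_.map_mul, ← ofAdd_add, sub_eq_add_neg]
  -- continuity/boundedness of ev
  have hev_cont : ∀ b : D, Continuous (ev b) := fun b => cont_eval _
  have hev_norm : ∀ (b : D) χ, ‖ev b χ‖ = 1 := by
    intro b χ; rw [hev]; simp [Circle.norm_coe]
  -- integral of a character
  have hchar : ∀ b : D, ∫ χ, ev b χ ∂lam = if b = 0 then 1 else 0 := by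
    intro b
    split_ifs with h
    · subst h; rw [hev]; simp
    · exact integral_char_ne lam h
  -- integrability of ev * G-entry
  have hint2 : ∀ (b : D) (r s : Fin (2 * k)), Integrable (fun χ => ev b χ * G χ r s) lam := by
    intro b r s
    exact (hGint r s).bdd_mul (hev_cont b).aestronglyMeasurable (Filter.Eventually.of_forall fun χ => le_of_eq (hev_norm b χ))
  -- entry formula
  set M : Matrix (Fin n × Fin (2 * k)) (Fin n × Fin (2 * k)) ℂ :=
    (Matrix.of fun p q : Fin n × Fin (2 * k) => K (a q.1 - a p.1) p.2 q.2) +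
        (Complex.I / 2) • Jblock k n with hMdef
  have hMapply : ∀ p q : Fin n × Fin (2 * k),
      M p q = ∫ χ, ev (a q.1 - a p.1) χ * G χ p.2 q.2 ∂lam := by
    intro p q
    have hsplit : (fun χ => ev (a q.1 - a p.1) χ * G χ p.2 q.2)
        = fun χ => ev (a q.1 - a p.1) χ * F χ p.2 q.2
            + ev (a q.1 - a p.1) χ * ((Complex.I / 2) * Jc k p.2 q.2) := by
      funext χ
      rw [hGdef]
      simp only [Matrix.add_apply, Matrix.smul_apply, smul_eq_mul]
      ring
    have hintF : Integrable (fun χ => ev (a q.1 - a p.1) χ * F χ p.2 q.2) lam :=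
      (hFint p.2 q.2).bdd_mul (hev_cont _).aestronglyMeasurable
        (Filter.Eventually.of_forall fun χ => le_of_eq (hev_norm _ χ))
    have hintC : Integrable
        (fun χ => ev (a q.1 - a p.1) χ * ((Complex.I / 2) * Jc k p.2 q.2)) lam :=
      (integrable_eval lam _).mul_const _
    rw [hsplit, integral_add hintF hintC, integral_mul_const, hchar]
    have hKterm : K (a q.1 - a p.1) p.2 q.2
        = ∫ χ, ev (a q.1 - a p.1) χ * F χ p.2 q.2 ∂lam := hK _ _ _
    have hJ : ((Complex.I / 2) • Jblock k n) p q
        = (if a q.1 - a p.1 = 0 then 1 else 0) * ((Complex.I / 2) * Jc k p.2 q.2) := by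
      simp only [Matrix.smul_apply, smul_eq_mul, Jblock, Matrix.of_apply]
      by_cases h : p.1 = q.1
      · have : a q.1 - a p.1 = 0 := by rw [h, sub_self]
        simp [h, this]
      · have : a q.1 - a p.1 ≠ 0 := fun hc => h (hainj (sub_eq_zero.1 hc)).symm
        simp [h, this]
    rw [hMdef]
    simp only [Matrix.add_apply, Matrix.of_apply]
    rw [hKterm, hJ]
  -- Hermitian
  have hherm : M.IsHermitian := by
    ext p q
    rw [Matrix.conjTranspose_apply, hMapply q p, hMapply p q, RCLike.star_def, ← integral_conj]
    refine integral_congr_ae (hGpos.mono fun χ hχ => ?_)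
    have h2 : (starRingEnd ℂ) (G χ q.2 p.2) = G χ p.2 q.2 := by
      rw [← RCLike.star_def]; exact hχ.1.apply p.2 q.2
    simp only [_root_.map_mul, h2, hconj, neg_sub]
  refine Matrix.posSemidef_iff_dotProduct_mulVec.2 ⟨hherm, fun v => ?_⟩
  -- the twisted vector
  set w : PontryaginDual (Multiplicative D) → Fin (2 * k) → ℂ :=
    fun χ s => ∑ j : Fin n, ev (a j) χ * v (j, s) with hw
  set g : (Fin n × Fin (2 * k)) × (Fin n × Fin (2 * k)) →
      PontryaginDual (Multiplicative D) → ℂ :=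
    fun pq χ => (starRingEnd ℂ) (v pq.1) *
      (ev (a pq.2.1) χ * (starRingEnd ℂ) (ev (a pq.1.1) χ) * G χ pq.1.2 pq.2.2) * v pq.2 with hg
  have hwdef : ∀ χ t, w χ t = ∑ j : Fin n, ev (a j) χ * v (j, t) := fun χ t => rfl
  have hgdef : ∀ (pq : (Fin n × Fin (2 * k)) × (Fin n × Fin (2 * k))) χ,
      g pq χ = (starRingEnd ℂ) (v pq.1) *
        (ev (a pq.2.1) χ * (starRingEnd ℂ) (ev (a pq.1.1) χ) * G χ pq.1.2 pq.2.2) * v pq.2 :=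
    fun pq χ => rfl
  have hgint : ∀ pq, Integrable (g pq) lam := by
    intro pq
    have h1 : Integrable (fun χ =>
        ev (a pq.2.1) χ * (starRingEnd ℂ) (ev (a pq.1.1) χ) * G χ pq.1.2 pq.2.2) lam := by
      have := hint2 (a pq.2.1 - a pq.1.1) pq.1.2 pq.2.2
      refine this.congr ?_
      exact Filter.Eventually.of_forall fun χ => by simp only [← hev_mul]
    exact (h1.const_mul _).mul_const _
  -- pointwise identity
  have key : ∀ χ, (∑ pq : (Fin n × Fin (2 * k)) × (Fin n × Fin (2 * k)), g pq χ)
      = star (w χ) ⬝ᵥ (G χ).mulVec (w χ) := by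
    intro χ
    have hinner : ∀ p : Fin n × Fin (2 * k),
        (∑ q : Fin n × Fin (2 * k), g (p, q) χ)
          = (starRingEnd ℂ) (ev (a p.1) χ) * (starRingEnd ℂ) (v p) *
              ∑ t, G χ p.2 t * w χ t := by
      intro p
      rw [Fintype.sum_prod_type, Finset.sum_comm, Finset.mul_sum]
      refine Finset.sum_congr rfl fun t _ => ?_
      rw [hwdef, Finset.mul_sum, Finset.mul_sum]
      refine Finset.sum_congr rfl fun l _ => ?_
      rw [hgdef]
      ring
    calc (∑ pq : (Fin n × Fin (2 * k)) × (Fin n × Fin (2 * k)), g pq χ)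
        = ∑ p : Fin n × Fin (2 * k), ∑ q : Fin n × Fin (2 * k), g (p, q) χ := by
          rw [Fintype.sum_prod_type (f := fun pq : (Fin n × Fin (2 * k)) × (Fin n × Fin (2 * k)) =>
            g pq χ)]
      _ = ∑ p : Fin n × Fin (2 * k), (starRingEnd ℂ) (ev (a p.1) χ) * (starRingEnd ℂ) (v p) *
              ∑ t, G χ p.2 t * w χ t :=
          Finset.sum_congr rfl fun p _ => hinner p
      _ = ∑ j : Fin n, ∑ s : Fin (2 * k), (starRingEnd ℂ) (ev (a j) χ) *
              (starRingEnd ℂ) (v (j, s)) * ∑ t, G χ s t * w χ t := Fintype.sum_prod_type _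
      _ = ∑ s : Fin (2 * k), ∑ j : Fin n, (starRingEnd ℂ) (ev (a j) χ) *
              (starRingEnd ℂ) (v (j, s)) * ∑ t, G χ s t * w χ t := Finset.sum_comm
      _ = star (w χ) ⬝ᵥ (G χ).mulVec (w χ) := by
          simp only [dotProduct, Matrix.mulVec, Pi.star_apply, RCLike.star_def]
          refine Finset.sum_congr rfl fun s _ => ?_
          rw [← Finset.sum_mul]
          congr 1
          rw [hwdef, map_sum]
          refine Finset.sum_congr rfl fun j _ => ?_
          rw [_root_.map_mul]
  -- main computation
  have hrepr : star v ⬝ᵥ M.mulVec v = ∫ χ, star (w χ) ⬝ᵥ (G χ).mulVec (w χ) ∂lam := by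
    have hterm : ∀ p q : Fin n × Fin (2 * k),
        star (v p) * (M p q * v q) = ∫ χ, g (p, q) χ ∂lam := by
      intro p q
      have e1 : ∫ χ, g (p, q) χ ∂lam
          = (starRingEnd ℂ) (v p) *
            (∫ χ, ev (a q.1) χ * (starRingEnd ℂ) (ev (a p.1) χ) * G χ p.2 q.2 ∂lam) * v q := by
        simp only [hgdef]
        rw [integral_mul_const, integral_const_mul]
      rw [e1]
      have e2 : (∫ χ, ev (a q.1) χ * (starRingEnd ℂ) (ev (a p.1) χ) * G χ p.2 q.2 ∂lam)
          = M p q := by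
        rw [hMapply p q]
        congr 1
        funext χ
        rw [hev_mul]
      rw [e2, RCLike.star_def]
      ring
    calc star v ⬝ᵥ M.mulVec v = ∑ p, ∑ q, star (v p) * (M p q * v q) := by
          simp [dotProduct, Matrix.mulVec, Finset.mul_sum]
      _ = ∑ p, ∑ q, ∫ χ, g (p, q) χ ∂lam :=
          Finset.sum_congr rfl fun p _ => Finset.sum_congr rfl fun q _ => hterm p q
      _ = ∑ pq : (Fin n × Fin (2 * k)) × (Fin n × Fin (2 * k)), ∫ χ, g pq χ ∂lam := by
          rw [Fintype.sum_prod_type (f := fun pq : (Fin n × Fin (2 * k)) × (Fin n × Fin (2 * k)) =>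
            ∫ χ, g pq χ ∂lam)]
      _ = ∫ χ, ∑ pq : (Fin n × Fin (2 * k)) × (Fin n × Fin (2 * k)), g pq χ ∂lam :=
          (integral_finset_sum _ fun pq _ => hgint pq).symm
      _ = ∫ χ, star (w χ) ⬝ᵥ (G χ).mulVec (w χ) ∂lam :=
          integral_congr_ae (Filter.Eventually.of_forall fun χ => key χ)
  rw [hrepr]
  have hplus : ∀ᵐ χ ∂lam, 0 ≤ star (w χ) ⬝ᵥ (G χ).mulVec (w χ) :=
    hGpos.mono fun χ h => h.dotProduct_mulVec_nonneg (w χ)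
  have hintf : Integrable (fun χ => star (w χ) ⬝ᵥ (G χ).mulVec (w χ)) lam :=
    (integrable_finset_sum _ fun pq _ => hgint pq).congr
      (Filter.Eventually.of_forall fun χ => key χ)
  rw [Complex.le_def]
  constructor
  · have h1 : ∫ χ, (star (w χ) ⬝ᵥ (G χ).mulVec (w χ)).re ∂lam
        = (∫ χ, star (w χ) ⬝ᵥ (G χ).mulVec (w χ) ∂lam).re := by
      simpa using integral_re hintf
    rw [← h1]
    simp only [Complex.zero_re]
    refine integral_nonneg_of_ae (hplus.mono fun χ h => ?_)
    simpa using (Complex.le_def.1 h).1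
  · have h2 : ∫ χ, (star (w χ) ⬝ᵥ (G χ).mulVec (w χ)).im ∂lam
        = (∫ χ, star (w χ) ⬝ᵥ (G χ).mulVec (w χ) ∂lam).im := by
      simpa using integral_im hintf
    rw [← h2]
    simp only [Complex.zero_im]
    symm
    rw [← integral_zero (PontryaginDual (Multiplicative D)) ℝ (μ := lam)]
    refine integral_congr_ae (hplus.mono fun χ h => ?_)
    simpa using (Complex.le_def.1 h).2.symm
end

section
/- Let Φ = [[φ_{rs}]] (r,s = 1,…,2k) be a 2k×2k Hermitian positive matrix-valued measure on a measurable space and λ a finite measure such that Φ(S) + (i/2)λ(S)J_{2k} ≥ 0 for all measurable S. Then for each r ∈ {1,…,k}, λ is absolutely continuous with respect to the diagonal measure φ_{2r−1,2r−1}, and also with respect to φ_{2r,2r}. -/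
open MeasureTheory
open scoped ComplexOrder

lemma Jc_one {k : ℕ} (i j : Fin (2 * k)) (h1 : i.1 % 2 = 0) (h2 : j.1 = i.1 + 1) :
    Jc k i j = 1 := by
  simp only [Jc, Matrix.of_apply]; rw [if_pos ⟨h1, h2⟩]

lemma Jc_negone {k : ℕ} (i j : Fin (2 * k)) (h1 : j.1 % 2 = 0) (h2 : i.1 = j.1 + 1) :
    Jc k i j = -1 := by
  simp only [Jc, Matrix.of_apply]; rw [if_neg (by omega), if_pos ⟨h1, h2⟩]

lemma Jc_zero {k : ℕ} (i j : Fin (2 * k)) (h1 : j.1 ≠ i.1 + 1) (h2 : i.1 ≠ j.1 + 1) :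
    Jc k i j = 0 := by
  simp only [Jc, Matrix.of_apply]; rw [if_neg (by omega), if_neg (by omega)]

/-- A (countably additive) matrix-valued set function. -/
def IsMatrixMeasure {X : Type*} [MeasurableSpace X] {n : Type*} [Fintype n]
    (Φ : Set X → Matrix n n ℂ) : Prop :=
  Φ ∅ = 0 ∧ ∀ f : ℕ → Set X, (∀ i, MeasurableSet (f i)) →
    Pairwise (Function.onFun Disjoint f) →
      HasSum (fun i => Φ (f i)) (Φ (⋃ i, f i))

/-- In a PSD matrix, a zero diagonal entry forces the whole row to vanish. -/
lemma psd_row_zero {n : ℕ} {M : Matrix (Fin n) (Fin n) ℂ} (hM : M.PosSemidef)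
    (i j : Fin n) (h : M i i = 0) : M i j = 0 := by
  obtain ⟨B, rfl⟩ : ∃ B : Matrix (Fin n) (Fin n) ℂ, M = B.conjTranspose * B := by
    open scoped MatrixOrder in
    obtain ⟨X, hX, -, hXM⟩ := CFC.exists_sqrt_of_isSelfAdjoint_of_quasispectrumRestricts hM.isHermitian
      (QuasispectrumRestricts.nnreal_of_nonneg hM.nonneg)
    exact ⟨X, by rw [← Matrix.star_eq_conjTranspose, hX.star_eq, hXM]⟩
  have hii : ∑ l, star (B l i) * B l i = 0 := by
    simpa [Matrix.mul_apply, Matrix.conjTranspose_apply] using h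
  have hcol : ∀ l, B l i = 0 := by
    have hnn : ∀ l ∈ Finset.univ, (0 : ℂ) ≤ star (B l i) * B l i :=
      fun l _ => star_mul_self_nonneg _
    have := (Finset.sum_eq_zero_iff_of_nonneg hnn).mp hii
    intro l
    have h' := this l (Finset.mem_univ l)
    rw [RCLike.star_def, ← Complex.normSq_eq_conj_mul_self] at h'
    exact Complex.normSq_eq_zero.mp (by exact_mod_cast h')
  simp [Matrix.mul_apply, Matrix.conjTranspose_apply, hcol]

theorem haar_abs_continuous_wrt_diagonal_entries
    {X : Type*} [MeasurableSpace X] {k : ℕ}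
    (Φ : Set X → Matrix (Fin (2 * k)) (Fin (2 * k)) ℂ)
    (hΦmeas : IsMatrixMeasure Φ)
    (hΦpos : ∀ S : Set X, MeasurableSet S → (Φ S).PosSemidef)
    (lam : Measure X) [IsFiniteMeasure lam]
    (huncert : ∀ S : Set X, MeasurableSet S →
      (Φ S + (Complex.I / 2 * ((lam S).toReal : ℂ)) • Jc k).PosSemidef) :
    ∀ r : Fin k, ∀ S : Set X, MeasurableSet S →
      ((Φ S ⟨2 * r.1, by have := r.2; omega⟩ ⟨2 * r.1, by have := r.2; omega⟩ = 0 →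
          lam S = 0) ∧
        (Φ S ⟨2 * r.1 + 1, by have := r.2; omega⟩ ⟨2 * r.1 + 1, by have := r.2; omega⟩ = 0 →
          lam S = 0)) := by
  intro r S hS
  set a : Fin (2 * k) := ⟨2 * r.1, by have := r.2; omega⟩
  set b : Fin (2 * k) := ⟨2 * r.1 + 1, by have := r.2; omega⟩
  have ha : a.val = 2 * r.1 := rfl
  have hb : b.val = 2 * r.1 + 1 := rfl
  have hJab : Jc k a b = 1 := Jc_one a b (by omega) (by omega)
  have hJba : Jc k b a = -1 := Jc_negone b a (by omega) (by omega)
  have hJaa : Jc k a a = 0 := Jc_zero a a (by omega) (by omega)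
  have hJbb : Jc k b b = 0 := Jc_zero b b (by omega) (by omega)
  have hM := huncert S hS
  set c : ℂ := Complex.I / 2 * ((lam S).toReal : ℂ) with hc
  have key : c = 0 → lam S = 0 := by
    intro h
    have hI : (Complex.I / 2 : ℂ) ≠ 0 := by
      simp [Complex.I_ne_zero]
    rcases mul_eq_zero.mp h with h' | h'
    · exact absurd h' hI
    have : (lam S).toReal = 0 := by exact_mod_cast h'
    rcases (ENNReal.toReal_eq_zero_iff _).mp this with h0 | htop
    · exact h0
    · exact absurd htop (measure_ne_top lam S)
  constructor
  · intro hzero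
    have hMaa : (Φ S + c • Jc k) a a = 0 := by
      simp [Matrix.add_apply, Matrix.smul_apply, hJaa, hzero]
    have hMab := psd_row_zero hM a b hMaa
    have hPab := psd_row_zero (hΦpos S hS) a b hzero
    have : c = 0 := by
      simpa [Matrix.add_apply, Matrix.smul_apply, hJab, hPab] using hMab
    exact key this
  · intro hzero
    have hMbb : (Φ S + c • Jc k) b b = 0 := by
      simp [Matrix.add_apply, Matrix.smul_apply, hJbb, hzero]
    have hMba := psd_row_zero hM b a hMbb
    have hPba := psd_row_zero (hΦpos S hS) b a hzero
    have : -c = 0 := by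
      simpa [Matrix.add_apply, Matrix.smul_apply, hJba, hPba] using hMba
    exact key (by simpa using this)
end

section
/- If M is a 2k×2k complex Hermitian matrix satisfying M + (i/2)J_{2k} ≥ 0 and M is real (M = conj(M)), then det M ≥ 1/4^k. -/
open scoped ComplexOrder
open Matrix

lemma Jc_transpose (k : ℕ) : (Jc k)ᵀ = -Jc k := by
  ext i j
  simp only [Matrix.transpose_apply, Matrix.neg_apply, Jc, Matrix.of_apply]
  split_ifs <;> first | (exfalso; omega) | norm_num

lemma Jc_mul_Jc (k : ℕ) : Jc k * Jc k = -1 := by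
  ext i j
  rw [Matrix.mul_apply]
  by_cases hi : i.val % 2 = 0
  · have hb : i.val + 1 < 2 * k := by omega
    rw [Finset.sum_eq_single (⟨i.val + 1, hb⟩ : Fin (2 * k))]
    · simp only [Jc, Matrix.of_apply, Matrix.neg_apply, Matrix.one_apply, Fin.ext_iff, and_true, true_and]
      split_ifs <;> first | (exfalso; omega) | norm_num
    · intro l _ hl
      have hlv : l.val ≠ i.val + 1 := fun hc => hl (Fin.ext hc)
      simp only [Jc, Matrix.of_apply]
      split_ifs <;> first | (exfalso; omega) | norm_num
    · intro hmem; exact absurd (Finset.mem_univ _) hmem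
  · have hb : i.val - 1 < 2 * k := by omega
    rw [Finset.sum_eq_single (⟨i.val - 1, hb⟩ : Fin (2 * k))]
    · simp only [Jc, Matrix.of_apply, Matrix.neg_apply, Matrix.one_apply, Fin.ext_iff, and_true, true_and]
      split_ifs <;> first | (exfalso; omega) | norm_num
    · intro l _ hl
      have hlv : l.val ≠ i.val - 1 := fun hc => hl (Fin.ext hc)
      simp only [Jc, Matrix.of_apply]
      split_ifs <;> first | (exfalso; omega) | norm_num
    · intro hmem; exact absurd (Finset.mem_univ _) hmem

theorem det_quantum_covariance_ge
    {k : ℕ} (M : Matrix (Fin (2 * k)) (Fin (2 * k)) ℝ) (hsymm : M.IsSymm)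
    (h : (M.map ((↑) : ℝ → ℂ) + (Complex.I / 2) • Jc k).PosSemidef) :
    (1 : ℝ) / 4 ^ k ≤ M.det := by
  set Mc : Matrix (Fin (2 * k)) (Fin (2 * k)) ℂ := M.map ((↑) : ℝ → ℂ) with hMc_def
  set J : Matrix (Fin (2 * k)) (Fin (2 * k)) ℂ := Jc k with hJ_def
  set N : Matrix (Fin (2 * k)) (Fin (2 * k)) ℂ := Mc + (Complex.I / 2) • J with hN_def
  -- basic symmetry facts
  have hMcT : Mcᵀ = Mc := by
    rw [hMc_def, ← Matrix.transpose_map, hsymm]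
  have hMcH : Mc.IsHermitian := by
    show Mcᴴ = Mc
    ext i j
    simp only [Matrix.conjTranspose_apply, hMc_def, Matrix.map_apply, Complex.star_def,
      Complex.conj_ofReal, hsymm.apply]
  have hNT : Nᵀ = Mc - (Complex.I / 2) • J := by
    rw [hN_def, Matrix.transpose_add, Matrix.transpose_smul, hMcT, hJ_def, Jc_transpose,
      smul_neg, sub_eq_add_neg]
  have h2 : (Mc - (Complex.I / 2) • J).PosSemidef := hNT ▸ h.transpose
  -- Mc is positive semidefinite
  have hMcPSD : Mc.PosSemidef := by
    refine Matrix.PosSemidef.of_dotProduct_mulVec_nonneg hMcH fun x => ?_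
    have h1x := h.dotProduct_mulVec_nonneg x
    have h2x := h2.dotProduct_mulVec_nonneg x
    have hsum : N + (Mc - (Complex.I / 2) • J) = Mc + Mc := by rw [hN_def]; abel
    have hq : (0:ℂ) ≤ star x ⬝ᵥ (Mc *ᵥ x) + star x ⬝ᵥ (Mc *ᵥ x) := by
      have := add_nonneg h1x h2x
      rwa [← dotProduct_add, ← Matrix.add_mulVec, hsum, Matrix.add_mulVec,
        dotProduct_add] at this
    rw [Complex.le_def] at hq ⊢
    constructor
    · simp only [Complex.add_re, Complex.zero_re] at hq ⊢; linarith [hq.1]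
    · simp only [Complex.add_im, Complex.zero_im] at hq ⊢; linarith [hq.2]
  -- Mc has nonzero determinant
  have hdet : Mc.det ≠ 0 := by
    intro hd
    obtain ⟨v, hv0, hv⟩ := (Matrix.exists_mulVec_eq_zero_iff).2 hd
    have hNv : N *ᵥ v = (Complex.I / 2) • (J *ᵥ v) := by
      rw [hN_def, Matrix.add_mulVec, hv, Matrix.smul_mulVec, zero_add]
    have hN2v : (Mc - (Complex.I / 2) • J) *ᵥ v = -((Complex.I / 2) • (J *ᵥ v)) := by
      rw [Matrix.sub_mulVec, hv, Matrix.smul_mulVec, zero_sub]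
    have ha := h.dotProduct_mulVec_nonneg v
    have hb := h2.dotProduct_mulVec_nonneg v
    rw [hNv] at ha
    rw [hN2v, dotProduct_neg] at hb
    have hzero : star v ⬝ᵥ ((Complex.I / 2) • (J *ᵥ v)) = 0 :=
      le_antisymm (neg_nonneg.1 hb) ha
    have hNv0 : N *ᵥ v = 0 := by
      refine (h.dotProduct_mulVec_zero_iff v).1 ?_
      rw [hNv, hzero]
    have hJv : J *ᵥ v = 0 := by
      have : (Complex.I / 2) • (J *ᵥ v) = 0 := by rw [← hNv, hNv0]
      have hc : (Complex.I / 2) ≠ 0 := by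
        simp [Complex.I_ne_zero, div_eq_zero_iff]
      exact (smul_eq_zero.1 this).resolve_left hc
    have : -v = 0 := by
      have h1 : J *ᵥ (J *ᵥ v) = 0 := by rw [hJv, Matrix.mulVec_zero]
      rwa [Matrix.mulVec_mulVec, hJ_def, Jc_mul_Jc, Matrix.neg_mulVec, Matrix.one_mulVec] at h1
    exact hv0 (by simpa [neg_eq_zero] using this)
  -- Mc is positive definite
  have hMcPD : Mc.PosDef := by
    refine Matrix.PosDef.of_dotProduct_mulVec_pos hMcH fun x hx => ?_
    refine lt_of_le_of_ne (hMcPSD.dotProduct_mulVec_nonneg x) fun heq => hx ?_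
    have hx0 : Mc *ᵥ x = 0 := (hMcPSD.dotProduct_mulVec_zero_iff x).1 heq.symm
    have hinj : Function.Injective Mc.mulVec :=
      Matrix.mulVec_injective_iff_isUnit.2 ((Matrix.isUnit_iff_isUnit_det Mc).2
        (isUnit_iff_ne_zero.2 hdet))
    have := hinj (a₁ := x) (a₂ := 0) (by rw [hx0, Matrix.mulVec_zero])
    exact this
  -- square root of Mc
  obtain ⟨Q, hQPSD, hQQ⟩ : ∃ Q : Matrix (Fin (2 * k)) (Fin (2 * k)) ℂ,
      Q.PosSemidef ∧ Q * Q = Mc :=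
    open scoped MatrixOrder in ⟨CFC.sqrt Mc, Matrix.nonneg_iff_posSemidef.1 (CFC.sqrt_nonneg Mc),
      CFC.sqrt_mul_sqrt_self Mc (Matrix.nonneg_iff_posSemidef.2 hMcPSD)⟩
  have hQdet : Q.det ≠ 0 := fun h0 => hdet (by rw [← hQQ, Matrix.det_mul, h0, mul_zero])
  have hQunit : IsUnit Q.det := isUnit_iff_ne_zero.2 hQdet
  set S := Q⁻¹ with hSdef
  have hSH : S.IsHermitian := hQPSD.1.inv
  have hSQ : S * Q = 1 := Matrix.nonsing_inv_mul Q hQunit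
  have hQS : Q * S = 1 := Matrix.mul_nonsing_inv Q hQunit
  have hSMS : S * Mc * S = 1 := by
    rw [← hQQ, ← mul_assoc S Q Q, hSQ, one_mul, hQS]
  -- the conjugated matrices
  set A := S * J * S with hA_def
  set Hm := (Complex.I / 2) • A with hHm_def
  have hsJs : S * ((Complex.I / 2) • J) * S = Hm := by
    rw [hHm_def, hA_def, Matrix.mul_smul, Matrix.smul_mul]
  have hconj : Sᴴ * N * S = 1 + Hm := by
    rw [hSH, hN_def, Matrix.mul_add, Matrix.add_mul, hSMS, hsJs]
  have hconj2 : Sᴴ * (Mc - (Complex.I / 2) • J) * S = 1 - Hm := by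
    rw [hSH, Matrix.mul_sub, Matrix.sub_mul, hSMS, hsJs]
  have hP1 : (1 + Hm).PosSemidef := hconj ▸ h.conjTranspose_mul_mul_same S
  have hP2 : (1 - Hm).PosSemidef := hconj2 ▸ h2.conjTranspose_mul_mul_same S
  have hHmH : Hm.IsHermitian := by
    have h1H : (1 + Hm)ᴴ = 1 + Hm := hP1.1
    rw [Matrix.conjTranspose_add, Matrix.conjTranspose_one] at h1H
    exact add_left_cancel h1H
  -- eigenvalue bounds
  have hbound : ∀ i, |hHmH.eigenvalues i| ≤ 1 := by
    intro i
    set v : Fin (2 * k) → ℂ := ⇑(hHmH.eigenvectorBasis i) with hv_def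
    have hvv : star v ⬝ᵥ v = 1 := by
      have h1 : (inner ℂ (hHmH.eigenvectorBasis i) (hHmH.eigenvectorBasis i) : ℂ)
          = star v ⬝ᵥ v := (EuclideanSpace.inner_eq_star_dotProduct _ _).trans (dotProduct_comm _ _)
      rw [← h1, inner_self_eq_norm_sq_to_K, hHmH.eigenvectorBasis.orthonormal.1 i]
      norm_num
    have hμ : Hm *ᵥ v = hHmH.eigenvalues i • v := hHmH.mulVec_eigenvectorBasis i
    have e1 : star v ⬝ᵥ ((1 + Hm) *ᵥ v) = 1 + (hHmH.eigenvalues i : ℂ) := by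
      rw [Matrix.add_mulVec, Matrix.one_mulVec, dotProduct_add, hvv, hμ,
        dotProduct_smul, hvv]
      simp [Complex.real_smul]
    have e2 : star v ⬝ᵥ ((1 - Hm) *ᵥ v) = 1 - (hHmH.eigenvalues i : ℂ) := by
      rw [Matrix.sub_mulVec, Matrix.one_mulVec, dotProduct_sub, hvv, hμ,
        dotProduct_smul, hvv]
      simp [Complex.real_smul]
    have b1 : (0:ℂ) ≤ 1 + (hHmH.eigenvalues i : ℂ) := e1 ▸ hP1.dotProduct_mulVec_nonneg v
    have b2 : (0:ℂ) ≤ 1 - (hHmH.eigenvalues i : ℂ) := e2 ▸ hP2.dotProduct_mulVec_nonneg v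
    rw [abs_le]
    constructor
    · have : (0:ℂ) ≤ ((1 + hHmH.eigenvalues i : ℝ) : ℂ) := by push_cast; exact b1
      have := Complex.zero_le_real.1 this
      linarith
    · have : (0:ℂ) ≤ ((1 - hHmH.eigenvalues i : ℝ) : ℂ) := by push_cast; exact b2
      have := Complex.zero_le_real.1 this
      linarith
  -- determinant of Hm is at most 1 in absolute value
  have hdetHm : ‖Hm.det‖ ≤ 1 := by
    rw [hHmH.det_eq_prod_eigenvalues, norm_prod]
    refine Finset.prod_le_one (fun i _ => norm_nonneg _) (fun i _ => ?_)
    simpa using hbound i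
  -- determinant identities
  have hdetA : A.det = S.det * J.det * S.det := by
    rw [hA_def, Matrix.det_mul, Matrix.det_mul]
  have hdetHm_eq : Hm.det = (Complex.I / 2) ^ (2 * k) * A.det := by
    rw [hHm_def, Matrix.det_smul, Fintype.card_fin]
  have hJJ : J.det * J.det = 1 := by
    have hd := congrArg Matrix.det (Jc_mul_Jc k)
    rw [Matrix.det_mul] at hd
    rw [hJ_def, hd]
    rw [show (-1 : Matrix (Fin (2 * k)) (Fin (2 * k)) ℂ) = -(1 : Matrix _ _ ℂ) from rfl,
      Matrix.det_neg, Matrix.det_one, Fintype.card_fin, mul_one, pow_mul]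
    norm_num
  have habsJ : ‖J.det‖ = 1 := by
    have h1 : ‖J.det‖ * ‖J.det‖ = 1 := by
      rw [← norm_mul, hJJ, norm_one]
    rcases mul_self_eq_one_iff.1 h1 with h' | h'
    · exact h'
    · exfalso; have := norm_nonneg J.det; rw [h'] at this; linarith
  have hSdet : S.det = Q.det⁻¹ := by
    rw [hSdef, Matrix.det_nonsing_inv, Ring.inverse_eq_inv']
  have hQd2 : Q.det * Q.det = Mc.det := by rw [← Matrix.det_mul, hQQ]
  have hMcdet : Mc.det = (M.det : ℂ) := by
    rw [hMc_def]
    have := RingHom.map_det Complex.ofRealHom M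
    rw [RingHom.mapMatrix_apply] at this
    exact this.symm
  have hdpos : (0 : ℝ) < M.det := by
    have := hMcPD.det_pos
    rw [hMcdet] at this
    exact Complex.zero_lt_real.1 this
  have habsI2 : ‖(Complex.I / 2)‖ = 1 / 2 := by
    simp [norm_div, Complex.norm_I]
  have e : ‖Hm.det‖
      = (1 / 2 : ℝ) ^ (2 * k) * (‖S.det‖ * ‖S.det‖) := by
    rw [hdetHm_eq, norm_mul, norm_pow, hdetA, norm_mul, norm_mul, habsJ, habsI2]
    ring
  have habsS : ‖S.det‖ = (‖Q.det‖)⁻¹ := by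
    rw [hSdet, norm_inv]
  have haa : ‖Q.det‖ * ‖Q.det‖ = M.det := by
    rw [← norm_mul, hQd2, hMcdet, Complex.norm_real, Real.norm_eq_abs, abs_of_pos hdpos]
  have key : (4 ^ k : ℝ)⁻¹ * (M.det)⁻¹ ≤ 1 := by
    have e2 : (1 / 2 : ℝ) ^ (2 * k) = (4 ^ k : ℝ)⁻¹ := by
      rw [pow_mul]
      norm_num
      rw [← inv_pow]
      norm_num
    have e3 : ‖S.det‖ * ‖S.det‖ = (M.det)⁻¹ := by
      rw [habsS, ← mul_inv, haa]
    calc (4 ^ k : ℝ)⁻¹ * (M.det)⁻¹ = ‖Hm.det‖ := by rw [e, e2, e3]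
      _ ≤ 1 := hdetHm
  have h4 : (0 : ℝ) < 4 ^ k := by positivity
  rw [div_le_iff₀ h4]
  have hmul := mul_inv_cancel₀ (ne_of_gt (mul_pos h4 hdpos))
  rw [← mul_inv] at key
  nlinarith [key, hmul, mul_pos h4 hdpos]
end

section
/- Let K : D → M_{2k}(ℝ) satisfy K(−a) = K(a)ᵀ, and suppose there exists a positive Hermitian 2k×2k matrix-valued measure Φ on the Borel sets of the compact dual D̂ of the discrete abelian group D with Φ(S) + (i/2)λ(S)J_{2k} ≥ 0 for all Borel S (λ the normalized Haar measure) and K(a) = ∫_{D̂} χ(a) dΦ(χ) for all a ∈ D. Then the function L(a) = K(a) + (i/2)𝟙_{a=0}J_{2k} satisfies: [[L(a_j − a_i)]]_{i,j=1}^n ≥ 0 for all finite sequences (a₁,…,aₙ) of distinct elements of D. -/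
open MeasureTheory
open scoped ComplexOrder

lemma Jc_conj (k : ℕ) (r s : Fin (2*k)) : (starRingEnd ℂ) (Jc k r s) = Jc k r s := by
  unfold Jc; simp only [Matrix.of_apply]; split_ifs <;> simp

lemma Jc_antisymm (k : ℕ) (r s : Fin (2*k)) : Jc k s r = - Jc k r s := by
  unfold Jc; simp only [Matrix.of_apply]
  split_ifs <;> first | omega | norm_num

lemma dense_ratComplex : Dense {z : ℂ | ∃ p q : ℚ, z = (p : ℂ) + (q : ℂ) * Complex.I} := by
  rw [Metric.dense_iff]
  intro z ε hε
  obtain ⟨p, hp⟩ := exists_rat_near z.re (show (0:ℝ) < ε/2 by positivity)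
  obtain ⟨q, hq⟩ := exists_rat_near z.im (show (0:ℝ) < ε/2 by positivity)
  refine ⟨(p : ℂ) + (q : ℂ) * Complex.I, Metric.mem_ball.mpr ?_, ⟨p, q, rfl⟩⟩
  rw [Complex.dist_eq]
  have h1 : ((p : ℂ) + (q : ℂ) * Complex.I - z).re = (p : ℝ) - z.re := by simp
  have h2 : ((p : ℂ) + (q : ℂ) * Complex.I - z).im = (q : ℝ) - z.im := by simp
  calc ‖(p : ℂ) + (q : ℂ) * Complex.I - z‖
      ≤ |((p : ℂ) + (q : ℂ) * Complex.I - z).re| + |((p : ℂ) + (q : ℂ) * Complex.I - z).im| :=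
        Complex.norm_le_abs_re_add_abs_im _
    _ < ε := by rw [h1, h2, abs_sub_comm _ z.re, abs_sub_comm _ z.im]; linarith

lemma integral_complex_nonneg {Y : Type*} [MeasurableSpace Y] {ν : Measure Y} {F : Y → ℂ}
    (hint : Integrable F ν) (hpos : 0 ≤ᵐ[ν] F) : 0 ≤ ∫ x, F x ∂ν := by
  rw [Complex.le_def]
  have hre : ∀ᵐ x ∂ν, 0 ≤ (F x).re := hpos.mono fun x hx => (Complex.le_def.mp hx).1
  have him : ∀ᵐ x ∂ν, (F x).im = 0 := hpos.mono fun x hx => ((Complex.le_def.mp hx).2).symm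
  constructor
  · have h := integral_re hint (μ := ν)
    simp only [RCLike.re_to_complex] at h
    rw [Complex.zero_re, ← h]
    exact integral_nonneg_of_ae hre
  · have h := integral_im hint (μ := ν)
    simp only [RCLike.im_to_complex] at h
    rw [Complex.zero_im, ← h, integral_congr_ae (g := fun _ => (0:ℝ)) him]
    simp

lemma isClosed_nonneg_complex : IsClosed {z : ℂ | 0 ≤ z} := by
  have h : {z : ℂ | 0 ≤ z} = Complex.re ⁻¹' Set.Ici 0 ∩ Complex.im ⁻¹' {0} := by
    ext z; simp [Complex.le_def, eq_comm]
  rw [h]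
  exact (isClosed_Ici.preimage Complex.continuous_re).inter
    (isClosed_singleton.preimage Complex.continuous_im)

lemma sum_reorder {α β : Type*} [Fintype α] [Fintype β] (f : α → β → α → β → ℂ) :
    ∑ i, ∑ r, ∑ j, ∑ s, f i r j s = ∑ r, ∑ s, ∑ j, ∑ i, f i r j s := by
  rw [Finset.sum_comm]
  refine Finset.sum_congr rfl fun r _ => ?_
  have h1 : ∑ i, ∑ j, ∑ s, f i r j s = ∑ i, ∑ s, ∑ j, f i r j s :=
    Finset.sum_congr rfl fun i _ => Finset.sum_comm
  rw [h1, Finset.sum_comm]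
  exact Finset.sum_congr rfl fun s _ => Finset.sum_comm

lemma quadform_eq {ι : Type*} [Fintype ι] (c : ι → ℂ) (A : Matrix ι ι ℂ) :
    dotProduct (star c) (A.mulVec c)
      = ∑ r, ∑ s, (starRingEnd ℂ) (c r) * (A r s * c s) := by
  simp [dotProduct, Matrix.mulVec, Finset.mul_sum, Complex.star_def]

lemma exists_char_ne_one_s16 {D : Type*} [AddCommGroup D]
    [TopologicalSpace D] [DiscreteTopology D] {b : D} (hb : b ≠ 0) :
    ∃ ψ : PontryaginDual (Multiplicative D), ψ (Multiplicative.ofAdd b) ≠ 1 := by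
  obtain ⟨c, hc⟩ := CharacterModule.exists_character_apply_ne_zero_of_ne_zero hb
  let φ : ℚ →+ AddCircle (1 : ℝ) :=
    (QuotientAddGroup.mk' (AddSubgroup.zmultiples (1:ℝ))).comp (Rat.castHom ℝ).toAddMonoidHom
  have hker : ∀ x ∈ AddSubgroup.zmultiples (1:ℚ), φ x = 0 := by
    intro x hx
    obtain ⟨m, hm⟩ := AddSubgroup.mem_zmultiples_iff.mp hx
    subst hm
    have h1 : φ (1:ℚ) = 0 := by
      show ((((1:ℚ):ℝ)) : AddCircle (1:ℝ)) = 0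
      rw [Rat.cast_one]
      exact AddCircle.coe_period (p := (1:ℝ))
    rw [map_zsmul, h1, smul_zero]
  let rr : AddCircle (1:ℚ) →+ AddCircle (1:ℝ) :=
    QuotientAddGroup.lift (AddSubgroup.zmultiples (1:ℚ)) φ hker
  have hrr : ∀ y : AddCircle (1:ℚ), rr y = 0 → y = 0 := by
    intro y hy
    induction y using QuotientAddGroup.induction_on with
    | H q =>
      have h2 : ((q:ℝ) : AddCircle (1:ℝ)) = 0 := hy
      rw [AddCircle.coe_eq_zero_iff] at h2
      obtain ⟨m, hm⟩ := h2
      have h3 : (m:ℝ) = (q:ℝ) := by rw [← hm]; simp [zsmul_eq_mul]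
      have hq : q = (m : ℚ) := by exact_mod_cast h3.symm
      show ((q : ℚ) : AddCircle (1:ℚ)) = 0
      rw [hq, AddCircle.coe_eq_zero_iff]
      exact ⟨m, by simp [zsmul_eq_mul]⟩
  haveI : DiscreteTopology (Multiplicative D) := ⟨DiscreteTopology.eq_bot (α := D)⟩
  refine ⟨⟨{ toFun := fun x => AddCircle.toCircle (rr (c x.toAdd)),
             map_one' := by simp,
             map_mul' := fun x y => by
               simp [AddCircle.toCircle_add] }, continuous_of_discreteTopology⟩, ?_⟩
  intro h
  have h0 : AddCircle.toCircle (rr (c b)) = 1 := h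
  have h4 : rr (c b) = 0 := by
    apply AddCircle.injective_toCircle one_ne_zero
    rw [h0, AddCircle.toCircle_zero]
  exact hc (hrr _ h4)

lemma charInt {D : Type*} [AddCommGroup D] [DecidableEq D] [TopologicalSpace D]
    [DiscreteTopology D]
    [MeasurableSpace (PontryaginDual (Multiplicative D))]
    [BorelSpace (PontryaginDual (Multiplicative D))]
    [CompactSpace (PontryaginDual (Multiplicative D))]
    (lam : Measure (PontryaginDual (Multiplicative D)))
    [lam.IsHaarMeasure] [IsProbabilityMeasure lam] (b : D) :
    ∫ χ : PontryaginDual (Multiplicative D), ((χ (Multiplicative.ofAdd b) : Circle) : ℂ) ∂lam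
      = if b = 0 then 1 else 0 := by
  split_ifs with hb
  · subst hb; simp
  · obtain ⟨ψ, hψ⟩ := exists_char_ne_one_s16 hb
    have hinv := integral_mul_left_eq_self (μ := lam)
      (fun χ : PontryaginDual (Multiplicative D) => ((χ (Multiplicative.ofAdd b) : Circle) : ℂ)) ψ
    have hmul : ∀ χ : PontryaginDual (Multiplicative D),
        (((ψ * χ) (Multiplicative.ofAdd b) : Circle) : ℂ)
          = ((ψ (Multiplicative.ofAdd b) : Circle) : ℂ)
            * ((χ (Multiplicative.ofAdd b) : Circle) : ℂ) := by
      intro χ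
      rw [show (ψ * χ) (Multiplicative.ofAdd b)
          = ψ (Multiplicative.ofAdd b) * χ (Multiplicative.ofAdd b) from rfl, Circle.coe_mul]
    simp_rw [hmul, integral_const_mul] at hinv
    have h5 : (((ψ (Multiplicative.ofAdd b) : Circle) : ℂ) - 1)
        * ∫ χ : PontryaginDual (Multiplicative D), ((χ (Multiplicative.ofAdd b) : Circle) : ℂ) ∂lam
        = 0 := by
      rw [sub_mul, one_mul, hinv, sub_self]
    exact (mul_eq_zero.mp h5).resolve_left
      (sub_ne_zero.mpr fun h => hψ (Circle.coe_eq_one.mp h))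

theorem L_blocks_posSemidef_of_spectral_representation
    {D : Type*} [AddCommGroup D] [Countable D] [DecidableEq D]
    [TopologicalSpace D] [DiscreteTopology D]
    [MeasurableSpace (PontryaginDual (Multiplicative D))]
    [BorelSpace (PontryaginDual (Multiplicative D))]
    [CompactSpace (PontryaginDual (Multiplicative D))]
    (lam : Measure (PontryaginDual (Multiplicative D)))
    [lam.IsHaarMeasure] [IsProbabilityMeasure lam]
    {k : ℕ}
    (K : D → Matrix (Fin (2 * k)) (Fin (2 * k)) ℝ)
    (hKsymm : ∀ a : D, K (-a) = (K a).transpose)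
    -- the matrix measure `Φ` is represented by an entrywise-integrable density `W`
    -- with respect to a finite positive measure `μ`: `Φ(S) r s = ∫_S W r s dμ`
    (μ : Measure (PontryaginDual (Multiplicative D))) [IsFiniteMeasure μ]
    (W : PontryaginDual (Multiplicative D) → Matrix (Fin (2 * k)) (Fin (2 * k)) ℂ)
    (hWint : ∀ r s, Integrable (fun χ => W χ r s) μ)
    (hΦpos : ∀ S : Set (PontryaginDual (Multiplicative D)), MeasurableSet S →
      (Matrix.of fun r s => ∫ χ in S, W χ r s ∂μ).PosSemidef)
    (huncert : ∀ S : Set (PontryaginDual (Multiplicative D)), MeasurableSet S →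
      ((Matrix.of fun r s => ∫ χ in S, W χ r s ∂μ) +
        (Complex.I / 2 * ((lam S).toReal : ℂ)) • Jc k).PosSemidef)
    -- spectral representation `K(a) = ∫ χ(a) dΦ(χ)`
    (hrep : ∀ (a : D) (r s : Fin (2 * k)),
      ((K a r s : ℝ) : ℂ)
        = ∫ χ, ((χ (Multiplicative.ofAdd a) : Circle) : ℂ) * W χ r s ∂μ) :
    -- conclusion: the blocks of `L(a) = K(a) + (i/2)𝟙_{a=0}J_{2k}` are positive semidefinite
    ∀ (n : ℕ) (a : Fin n → D), Function.Injective a →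
      (Matrix.of fun p q : Fin n × Fin (2 * k) =>
        ((K (a q.1 - a p.1)).map ((↑) : ℝ → ℂ) +
          (if a q.1 - a p.1 = 0 then Complex.I / 2 else 0) • Jc k) p.2 q.2).PosSemidef := by
  intro n a hinj
  classical
  -- notation
  set E : D → (PontryaginDual (Multiplicative D)) → ℂ := fun b χ => ((χ (Multiplicative.ofAdd b) : Circle) : ℂ) with hE
  set ν : Measure (PontryaginDual (Multiplicative D)) := μ + lam with hνdef
  have hμν : μ ≪ ν := Measure.absolutelyContinuous_of_le (Measure.le_add_right le_rfl)
  have hlamν : lam ≪ ν := Measure.absolutelyContinuous_of_le (Measure.le_add_left le_rfl)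
  haveI : IsFiniteMeasure ν := by rw [hνdef]; infer_instance
  -- continuity and boundedness of characters
  have hEcont : ∀ b : D, Continuous (E b) := by
    intro b
    rw [hE]
    exact continuous_subtype_val.comp
      (continuous_eval_const (F := ContinuousMonoidHom (Multiplicative D) Circle)
        (Multiplicative.ofAdd b))
  have hEnorm : ∀ (b : D) (χ : (PontryaginDual (Multiplicative D))), ‖E b χ‖ = 1 := by
    intro b χ; simp [hE, Circle.norm_coe]
  have hEconjnorm : ∀ (b : D) (χ : (PontryaginDual (Multiplicative D))), ‖(starRingEnd ℂ) (E b χ)‖ = 1 := by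
    intro b χ; rw [RCLike.norm_conj]; exact hEnorm b χ
  -- the density of `Φ + (i/2) λ J` with respect to `ν`
  set ρ : (PontryaginDual (Multiplicative D)) → Fin (2*k) → Fin (2*k) → ℂ := fun χ r s =>
    (μ.rnDeriv ν χ).toReal • W χ r s
      + ((lam.rnDeriv ν χ).toReal : ℂ) * (Complex.I/2 * Jc k r s) with hρdef
  have hρint : ∀ r s, Integrable (fun χ => ρ χ r s) ν := by
    intro r s
    exact ((integrable_rnDeriv_smul_iff hμν).mpr (hWint r s)).add
      (((Measure.integrable_toReal_rnDeriv (μ := lam) (ν := ν)).ofReal.mul_const (Complex.I/2 * Jc k r s)))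
  have hρset : ∀ S : Set (PontryaginDual (Multiplicative D)), MeasurableSet S → ∀ r s,
      ∫ χ in S, ρ χ r s ∂ν
        = (∫ χ in S, W χ r s ∂μ) + (Complex.I/2 * ((lam S).toReal : ℂ)) * Jc k r s := by
    intro S hS r s
    simp only [hρdef]
    have h1 : IntegrableOn (fun χ => (μ.rnDeriv ν χ).toReal • W χ r s) S ν :=
      ((integrable_rnDeriv_smul_iff hμν).mpr (hWint r s)).integrableOn
    have h2 : IntegrableOn
        (fun χ => ((lam.rnDeriv ν χ).toReal : ℂ) * (Complex.I/2 * Jc k r s)) S ν :=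
      ((Measure.integrable_toReal_rnDeriv (μ := lam) (ν := ν)).ofReal.mul_const
        (Complex.I/2 * Jc k r s)).integrableOn
    rw [integral_add h1 h2]
    congr 1
    · exact setIntegral_rnDeriv_smul hμν hS
    · rw [integral_mul_const]
      have hco : ∫ χ in S, ((lam.rnDeriv ν χ).toReal : ℂ) ∂ν
          = ((∫ χ in S, (lam.rnDeriv ν χ).toReal ∂ν : ℝ) : ℂ) :=
        integral_ofReal (𝕜 := ℂ)
      rw [hco, Measure.setIntegral_toReal_rnDeriv hlamν S, measureReal_def]
      ring
  -- the quadratic forms of `ρ`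
  set Q : (Fin (2*k) → ℂ) → (PontryaginDual (Multiplicative D)) → ℂ := fun c χ =>
    ∑ r, ∑ s, (starRingEnd ℂ) (c r) * (ρ χ r s * c s) with hQdef
  have hQint : ∀ c, Integrable (Q c) ν := by
    intro c
    apply integrable_finset_sum; intro r _
    apply integrable_finset_sum; intro s _
    exact ((hρint r s).mul_const _).const_mul _
  -- set integrals of the quadratic form are nonnegative
  have hsetQ : ∀ c, ∀ S : Set (PontryaginDual (Multiplicative D)), MeasurableSet S → (0:ℂ) ≤ ∫ χ in S, Q c χ ∂ν := by
    intro c S hS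
    have h1 : ∫ χ in S, Q c χ ∂ν = ∑ r, ∑ s, (starRingEnd ℂ) (c r)
        * ((((Matrix.of fun r s => ∫ χ in S, W χ r s ∂μ)
            + (Complex.I / 2 * ((lam S).toReal : ℂ)) • Jc k) r s) * c s) := by
      rw [hQdef]
      rw [integral_finset_sum _ (fun r _ => integrable_finset_sum _
        (fun s _ => (((hρint r s).mul_const _).const_mul _).integrableOn))]
      refine Finset.sum_congr rfl fun r _ => ?_
      rw [integral_finset_sum _ (fun s _ => (((hρint r s).mul_const _).const_mul _).integrableOn)]
      refine Finset.sum_congr rfl fun s _ => ?_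
      rw [integral_const_mul, integral_mul_const, hρset S hS r s]
      simp only [Matrix.add_apply, Matrix.smul_apply, Matrix.of_apply, smul_eq_mul]
    have h2 := (huncert S hS).dotProduct_mulVec_nonneg c
    rw [quadform_eq] at h2
    rw [h1]
    exact h2
  -- hence the quadratic form is a.e. nonnegative, for each fixed vector
  have hQaepos : ∀ c, ∀ᵐ χ ∂ν, 0 ≤ Q c χ := by
    intro c
    have hintre : Integrable (fun χ => (Q c χ).re) ν := by
      simpa [RCLike.re_to_complex] using (hQint c).re
    have hintim : Integrable (fun χ => (Q c χ).im) ν := by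
      simpa [RCLike.im_to_complex] using (hQint c).im
    have hre : ∀ᵐ χ ∂ν, 0 ≤ (Q c χ).re := by
      refine ae_nonneg_of_forall_setIntegral_nonneg hintre fun S hS _ => ?_
      have h := hsetQ c S hS
      rw [Complex.le_def] at h
      have heq := integral_re (hQint c).integrableOn (μ := ν.restrict S)
      simp only [RCLike.re_to_complex] at heq
      rw [heq]
      simpa using h.1
    have him1 : ∀ᵐ χ ∂ν, 0 ≤ (Q c χ).im := by
      refine ae_nonneg_of_forall_setIntegral_nonneg hintim fun S hS _ => ?_
      have h := hsetQ c S hS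
      rw [Complex.le_def] at h
      have heq := integral_im (hQint c).integrableOn (μ := ν.restrict S)
      simp only [RCLike.im_to_complex] at heq
      rw [heq, ← h.2]
      simp
    have him2 : ∀ᵐ χ ∂ν, 0 ≤ -(Q c χ).im := by
      refine ae_nonneg_of_forall_setIntegral_nonneg hintim.neg fun S hS _ => ?_
      have h := hsetQ c S hS
      rw [Complex.le_def] at h
      have heq := integral_im (hQint c).integrableOn (μ := ν.restrict S)
      simp only [RCLike.im_to_complex] at heq
      rw [integral_neg, heq, ← h.2]
      simp
    filter_upwards [hre, him1, him2] with χ h1 h2 h3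
    rw [Complex.le_def]
    refine ⟨by simpa using h1, ?_⟩
    have : (Q c χ).im = 0 := le_antisymm (by linarith) h2
    simp [this]
  -- a.e., the quadratic form is nonnegative for all vectors simultaneously
  have haeall : ∀ᵐ χ ∂ν, ∀ c : Fin (2*k) → ℂ, 0 ≤ Q c χ := by
    set cval : (Fin (2*k) → ℚ × ℚ) → (Fin (2*k) → ℂ) :=
      fun w i => ((w i).1 : ℂ) + ((w i).2 : ℂ) * Complex.I with hcval
    have hall : ∀ᵐ χ ∂ν, ∀ w : Fin (2*k) → ℚ × ℚ, 0 ≤ Q (cval w) χ :=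
      ae_all_iff.mpr fun w => hQaepos (cval w)
    refine hall.mono fun χ hχ c => ?_
    have hcont : Continuous fun c : Fin (2*k) → ℂ => Q c χ := by
      rw [hQdef]
      apply continuous_finset_sum; intro r _
      apply continuous_finset_sum; intro s _
      exact (Complex.continuous_conj.comp (continuous_apply r)).mul
        (continuous_const.mul (continuous_apply s))
    have hclosed : IsClosed {c : Fin (2*k) → ℂ | 0 ≤ Q c χ} :=
      isClosed_nonneg_complex.preimage hcont
    have hsub : (Set.univ.pi fun _ : Fin (2*k) =>
        {z : ℂ | ∃ p q : ℚ, z = (p:ℂ) + (q:ℂ) * Complex.I}) ⊆ {c | 0 ≤ Q c χ} := by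
      intro c hcmem
      rw [Set.mem_univ_pi] at hcmem
      choose p q hpq using hcmem
      have hceq : c = cval fun i => (p i, q i) := funext fun i => hpq i
      rw [Set.mem_setOf_eq, hceq]
      exact hχ _
    have hdense : Dense (Set.univ.pi fun _ : Fin (2*k) =>
        {z : ℂ | ∃ p q : ℚ, z = (p:ℂ) + (q:ℂ) * Complex.I}) :=
      dense_pi Set.univ fun i _ => dense_ratComplex
    have hd2 : Dense {c : Fin (2*k) → ℂ | 0 ≤ Q c χ} := hdense.mono hsub
    have huniv : {c : Fin (2*k) → ℂ | 0 ≤ Q c χ} = Set.univ := by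
      rw [← hclosed.closure_eq, hd2.closure_eq]
    exact (Set.eq_univ_iff_forall.mp huniv c : 0 ≤ Q c χ)
  -- multiplicativity of characters
  have hEsub : ∀ (x y : D) (χ : (PontryaginDual (Multiplicative D))), E (x - y) χ = (starRingEnd ℂ) (E y χ) * E x χ := by
    intro x y χ
    rw [hE]
    simp only
    rw [show Multiplicative.ofAdd (x - y) = Multiplicative.ofAdd x / Multiplicative.ofAdd y
      from ofAdd_sub x y, map_div, div_eq_mul_inv, Circle.coe_mul, Circle.coe_inv_eq_conj,
      mul_comm]
  -- block-entry formula
  have hblock : ∀ (b : D) (r s : Fin (2*k)),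
      ((K b r s : ℝ) : ℂ) + (if b = 0 then Complex.I/2 else 0) * Jc k r s
        = ∫ χ, E b χ * ρ χ r s ∂ν := by
    intro b r s
    have hint1 : Integrable (fun χ => E b χ * ((μ.rnDeriv ν χ).toReal • W χ r s)) ν :=
      Integrable.bdd_mul ((integrable_rnDeriv_smul_iff hμν).mpr (hWint r s))
        (hEcont b).aestronglyMeasurable (c := 1) (Filter.Eventually.of_forall fun χ => le_of_eq (hEnorm b χ))
    have hint2 : Integrable
        (fun χ => E b χ * (((lam.rnDeriv ν χ).toReal : ℂ) * (Complex.I/2 * Jc k r s))) ν :=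
      Integrable.bdd_mul ((Measure.integrable_toReal_rnDeriv (μ := lam) (ν := ν)).ofReal.mul_const _)
        (hEcont b).aestronglyMeasurable (c := 1) (Filter.Eventually.of_forall fun χ => le_of_eq (hEnorm b χ))
    have hsplit : ∫ χ, E b χ * ρ χ r s ∂ν
        = (∫ χ, E b χ * ((μ.rnDeriv ν χ).toReal • W χ r s) ∂ν)
          + ∫ χ, E b χ * (((lam.rnDeriv ν χ).toReal : ℂ) * (Complex.I/2 * Jc k r s)) ∂ν := by
      rw [← integral_add hint1 hint2]
      apply integral_congr_ae
      filter_upwards with χ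
      simp only [hρdef, mul_add]
    have hfirst : ∫ χ, E b χ * ((μ.rnDeriv ν χ).toReal • W χ r s) ∂ν = ((K b r s : ℝ) : ℂ) := by
      have heq : (fun χ => E b χ * ((μ.rnDeriv ν χ).toReal • W χ r s))
          = fun χ => (μ.rnDeriv ν χ).toReal • (E b χ * W χ r s) := by
        funext χ
        rw [Complex.real_smul, Complex.real_smul]; ring
      rw [heq, integral_rnDeriv_smul hμν]
      rw [hE]
      exact (hrep b r s).symm
    have hsecond : ∫ χ, E b χ * (((lam.rnDeriv ν χ).toReal : ℂ) * (Complex.I/2 * Jc k r s)) ∂ν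
        = (if b = 0 then 1 else 0) * (Complex.I/2 * Jc k r s) := by
      have heq : (fun χ => E b χ * (((lam.rnDeriv ν χ).toReal : ℂ) * (Complex.I/2 * Jc k r s)))
          = fun χ => (lam.rnDeriv ν χ).toReal • (E b χ * (Complex.I/2 * Jc k r s)) := by
        funext χ
        rw [Complex.real_smul]; ring
      rw [heq, integral_rnDeriv_smul hlamν, integral_mul_const]
      congr 1
      rw [hE]
      exact charInt lam b
    rw [hsplit, hfirst, hsecond]
    split_ifs <;> ring
  -- entries of the big block matrix
  have hMentry : ∀ p q : Fin n × Fin (2*k),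
      ((K (a q.1 - a p.1)).map ((↑) : ℝ → ℂ)
          + (if a q.1 - a p.1 = 0 then Complex.I / 2 else 0) • Jc k) p.2 q.2
        = ∫ χ, (starRingEnd ℂ) (E (a p.1) χ) * E (a q.1) χ * ρ χ p.2 q.2 ∂ν := by
    intro p q
    have h1 := hblock (a q.1 - a p.1) p.2 q.2
    have h2 : ∫ χ, E (a q.1 - a p.1) χ * ρ χ p.2 q.2 ∂ν
        = ∫ χ, (starRingEnd ℂ) (E (a p.1) χ) * E (a q.1) χ * ρ χ p.2 q.2 ∂ν := by
      apply integral_congr_ae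
      filter_upwards with χ
      rw [hEsub (a q.1) (a p.1) χ]
    rw [← h2, ← h1]
    simp only [Matrix.add_apply, Matrix.map_apply, Matrix.smul_apply, smul_eq_mul]
  rw [Matrix.posSemidef_iff_dotProduct_mulVec]
  refine ⟨?_, ?_⟩
  · -- Hermitian
    show _ = _
    ext p q
    simp only [Matrix.conjTranspose_apply, Matrix.of_apply, Matrix.add_apply, Matrix.map_apply,
      Matrix.smul_apply, smul_eq_mul]
    have hKe : K (a p.1 - a q.1) q.2 p.2 = K (a q.1 - a p.1) p.2 q.2 := by
      rw [show a p.1 - a q.1 = -(a q.1 - a p.1) from (neg_sub _ _).symm, hKsymm,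
        Matrix.transpose_apply]
    have hiff : (a p.1 - a q.1 = 0) ↔ (a q.1 - a p.1 = 0) :=
      ⟨fun h => sub_eq_zero.mpr (sub_eq_zero.mp h).symm,
       fun h => sub_eq_zero.mpr (sub_eq_zero.mp h).symm⟩
    rw [hKe]
    simp only [hiff]
    rw [Jc_antisymm k p.2 q.2]
    by_cases hb : a q.1 - a p.1 = 0 <;>
      simp [hb, Complex.star_def, map_add, map_mul, Complex.conj_ofReal, Jc_conj, Complex.conj_I] <;>
      ring
  · -- positivity of the quadratic form
    intro v
    rw [quadform_eq]
    simp only [Matrix.of_apply]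
    -- term integrability
    have hterm_int : ∀ p q : Fin n × Fin (2*k), Integrable (fun χ =>
        (starRingEnd ℂ) (v p) * (((starRingEnd ℂ) (E (a p.1) χ) * E (a q.1) χ * ρ χ p.2 q.2)
          * v q)) ν := by
      intro p q
      have h1 : Integrable (fun χ => E (a q.1) χ * ρ χ p.2 q.2) ν :=
        Integrable.bdd_mul (hρint _ _) (hEcont _).aestronglyMeasurable
          (c := 1) (Filter.Eventually.of_forall fun χ => le_of_eq (hEnorm _ χ))
      have h2 : Integrable (fun χ => (starRingEnd ℂ) (E (a p.1) χ)
          * (E (a q.1) χ * ρ χ p.2 q.2)) ν :=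
        Integrable.bdd_mul h1 (Complex.continuous_conj.comp (hEcont _)).aestronglyMeasurable
          (c := 1) (Filter.Eventually.of_forall fun χ => le_of_eq (hEconjnorm _ χ))
      have h3 := (h2.mul_const (v q)).const_mul ((starRingEnd ℂ) (v p))
      refine h3.congr (Filter.Eventually.of_forall fun χ => ?_)
      ring
    have hsum : ∑ p : Fin n × Fin (2*k), ∑ q : Fin n × Fin (2*k),
        (starRingEnd ℂ) (v p) * ((((K (a q.1 - a p.1)).map ((↑) : ℝ → ℂ)
          + (if a q.1 - a p.1 = 0 then Complex.I / 2 else 0) • Jc k) p.2 q.2) * v q)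
        = ∫ χ, ∑ p : Fin n × Fin (2*k), ∑ q : Fin n × Fin (2*k),
            (starRingEnd ℂ) (v p) * (((starRingEnd ℂ) (E (a p.1) χ) * E (a q.1) χ
              * ρ χ p.2 q.2) * v q) ∂ν := by
      rw [integral_finset_sum _ (fun p _ => integrable_finset_sum _ (fun q _ => hterm_int p q))]
      refine Finset.sum_congr rfl fun p _ => ?_
      rw [integral_finset_sum _ (fun q _ => hterm_int p q)]
      refine Finset.sum_congr rfl fun q _ => ?_
      rw [hMentry p q, ← integral_mul_const, ← integral_const_mul]
    rw [hsum]
    -- pointwise the integrand is a quadratic form of `ρ`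
    set fv : (PontryaginDual (Multiplicative D)) → Fin (2*k) → ℂ := fun χ r => ∑ i : Fin n, E (a i) χ * v (i, r) with hfv
    have hkey : ∀ χ : (PontryaginDual (Multiplicative D)), ∑ p : Fin n × Fin (2*k), ∑ q : Fin n × Fin (2*k),
        (starRingEnd ℂ) (v p) * (((starRingEnd ℂ) (E (a p.1) χ) * E (a q.1) χ
          * ρ χ p.2 q.2) * v q) = Q (fv χ) χ := by
      intro χ
      rw [hQdef, hfv]
      simp only [Fintype.sum_prod_type, map_sum, Finset.sum_mul, Finset.mul_sum, map_mul]
      refine Eq.trans (sum_reorder _) ?_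
      refine Finset.sum_congr rfl fun r _ => ?_
      refine Finset.sum_congr rfl fun s _ => ?_
      refine Finset.sum_congr rfl fun j _ => ?_
      refine Finset.sum_congr rfl fun i _ => ?_
      ring
    apply integral_complex_nonneg
    · apply integrable_finset_sum; intro p _
      apply integrable_finset_sum; intro q _
      exact hterm_int p q
    · filter_upwards [haeall] with χ hχ
      rw [Pi.zero_apply, hkey χ]
      exact hχ (fv χ)
end
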